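/- For r ≥ 2 and s ≥ 2, consider the Hermitian matrix H of order r + s + 2 given in block form by H = [[J_r - I_r, 1, 0, 0],[1ᵀ, 0, i, 0],[0, -i, 0, 1ᵀ],[0, 0, 1, J_s - I_s]] (a complete graph K_r joined to a vertex u, an arc from u to a vertex w, and w joined to a complete graph K_s). Then H has exactly 2 positive eigenvalues. -/

import Mathlib

set_option linter.unusedSectionVars false
set_option maxHeartbeats 1000000

/-- The Hermitian adjacency matrix of the mixed graph consisting of a complete graph
`K_r` completely joined (undirected) to a vertex `u`, an arc `u → w`, and `w` completely
joined (undirected) to a complete graph `K_s`; in block form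
`[[J_r - I_r, 1, 0, 0], [1ᵀ, 0, i, 0], [0, -i, 0, 1ᵀ], [0, 0, 1, J_s - I_s]]`. -/
def pathJoinAdj (r s : ℕ) :
    Matrix (Fin r ⊕ Unit ⊕ Unit ⊕ Fin s) (Fin r ⊕ Unit ⊕ Unit ⊕ Fin s) ℂ :=
  fun x y => match x, y with
  | .inl i, .inl j => if i = j then 0 else 1
  | .inl _, .inr (.inl _) => 1
  | .inr (.inl _), .inl _ => 1
  | .inr (.inl _), .inr (.inr (.inl _)) => Complex.I
  | .inr (.inr (.inl _)), .inr (.inl _) => -Complex.I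
  | .inr (.inr (.inl _)), .inr (.inr (.inr _)) => 1
  | .inr (.inr (.inr _)), .inr (.inr (.inl _)) => 1
  | .inr (.inr (.inr i)), .inr (.inr (.inr j)) => if i = j then 0 else 1
  | _, _ => 0

/-- The positive inertia index of a Hermitian matrix. -/
noncomputable def posIdx {n : Type*} [Fintype n] [DecidableEq n] {M : Matrix n n ℂ}
    (hM : M.IsHermitian) : ℕ :=
  Fintype.card {i // 0 < hM.eigenvalues i}

open Matrix Finset Module

namespace PJAux

variable {n : Type*} [Fintype n] [DecidableEq n]

/-- The real quadratic form of a matrix. -/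
noncomputable def qf (M : Matrix n n ℂ) (x : n → ℂ) : ℝ := (star x ⬝ᵥ M *ᵥ x).re

lemma qf_def (M : Matrix n n ℂ) (x : n → ℂ) : qf M x = (star x ⬝ᵥ M *ᵥ x).re := rfl

lemma qf_spectral {M : Matrix n n ℂ} (hM : M.IsHermitian) (x : n → ℂ) :
    qf M x = ∑ i, hM.eigenvalues i *
      Complex.normSq ((star (hM.eigenvectorUnitary : Matrix n n ℂ) *ᵥ x) i) := by
  set U := (hM.eigenvectorUnitary : Matrix n n ℂ) with hU
  set y := star U *ᵥ x with hy
  have h1 : star x ⬝ᵥ M *ᵥ x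
      = star y ⬝ᵥ (diagonal (Complex.ofReal ∘ hM.eigenvalues)) *ᵥ y := by
    conv_lhs => rw [hM.spectral_theorem, Unitary.conjStarAlgAut_apply]
    rw [hy, star_mulVec, ← Matrix.mulVec_mulVec, ← Matrix.mulVec_mulVec,
      Matrix.dotProduct_mulVec, star_eq_conjTranspose, conjTranspose_conjTranspose]
    rfl
  have h2 : star y ⬝ᵥ (diagonal (Complex.ofReal ∘ hM.eigenvalues)) *ᵥ y
      = ((∑ i, hM.eigenvalues i * Complex.normSq (y i) : ℝ) : ℂ) := by
    simp only [dotProduct, mulVec_diagonal, Function.comp_apply, Pi.star_apply,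
      Complex.ofReal_sum, Complex.ofReal_mul]
    refine Finset.sum_congr rfl fun i _ => ?_
    rw [RCLike.star_def, mul_comm (Complex.ofReal _) (y i), ← mul_assoc,
      mul_comm ((starRingEnd ℂ) (y i)) (y i), Complex.mul_conj, mul_comm]
  rw [qf, h1, h2, Complex.ofReal_re]

/-- Subspace of vectors whose `U`-coordinates vanish on the set where `p` holds. -/
noncomputable def coordKer (U : Matrix n n ℂ) (p : n → Prop) [DecidablePred p] :
    Submodule ℂ (n → ℂ) :=
  LinearMap.ker ((LinearMap.funLeft ℂ ℂ (fun i : {i // p i} => (i : n))).comp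
    (Matrix.mulVecLin (star U)))

lemma mem_coordKer {U : Matrix n n ℂ} {p : n → Prop} [DecidablePred p] {x : n → ℂ} :
    x ∈ coordKer U p ↔ ∀ i, p i → (star U *ᵥ x) i = 0 := by
  simp only [coordKer, LinearMap.mem_ker, LinearMap.comp_apply, Matrix.mulVecLin_apply,
    LinearMap.funLeft_apply, funext_iff]
  constructor
  · intro h i hi; exact h ⟨i, hi⟩
  · intro h i; exact h i i.2

lemma finrank_coordKer (U : Matrix n n ℂ) (hU : Function.Surjective (Matrix.mulVecLin (star U)))
    (p : n → Prop) [DecidablePred p] :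
    finrank ℂ (coordKer U p) + Fintype.card {i // p i} = Fintype.card n := by
  classical
  set L := (LinearMap.funLeft ℂ ℂ (fun i : {i // p i} => (i : n))).comp
    (Matrix.mulVecLin (star U)) with hL
  have hsurj : Function.Surjective L :=
    (LinearMap.funLeft_surjective_of_injective ℂ ℂ _ Subtype.val_injective).comp hU
  have h := LinearMap.finrank_range_add_finrank_ker L
  rw [LinearMap.range_eq_top.mpr hsurj, finrank_top, Module.finrank_fintype_fun_eq_card,
    Module.finrank_fintype_fun_eq_card] at h
  rw [coordKer, ← hL]
  omega

lemma disjoint_of_qf {M : Matrix n n ℂ} {P Q : Submodule ℂ (n → ℂ)}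
    (hP : ∀ x ∈ P, x ≠ 0 → 0 < qf M x) (hQ : ∀ x ∈ Q, qf M x ≤ 0) : Disjoint P Q := by
  rw [Submodule.disjoint_def]
  intro x hxP hxQ
  by_contra hx
  exact absurd (hP x hxP hx) (not_lt.2 (hQ x hxQ))

lemma bij_star_unitary (U : Matrix.unitaryGroup n ℂ) :
    Function.Bijective (Matrix.mulVecLin (star (U : Matrix n n ℂ))) := by
  have h1 : (U : Matrix n n ℂ) * star (U : Matrix n n ℂ) = 1 := Matrix.mem_unitaryGroup_iff.mp U.2
  constructor
  · intro x y h
    have h2 := congrArg (fun v => (U : Matrix n n ℂ) *ᵥ v) h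
    simpa [Matrix.mulVecLin_apply, Matrix.mulVec_mulVec, h1] using h2
  · intro y
    refine ⟨(U : Matrix n n ℂ) *ᵥ y, ?_⟩
    have h1' : star (U : Matrix n n ℂ) * (U : Matrix n n ℂ) = 1 :=
      Matrix.mem_unitaryGroup_iff'.mp U.2
    simp [Matrix.mulVecLin_apply, Matrix.mulVec_mulVec, h1']

lemma qf_nonpos_coordKer {M : Matrix n n ℂ} (hM : M.IsHermitian) (x : n → ℂ)
    (hx : x ∈ coordKer (hM.eigenvectorUnitary : Matrix n n ℂ) (fun i => 0 < hM.eigenvalues i)) :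
    qf M x ≤ 0 := by
  rw [qf_spectral hM]
  refine Finset.sum_nonpos fun i _ => ?_
  rcases lt_or_ge 0 (hM.eigenvalues i) with h | h
  · rw [mem_coordKer.mp hx i h]; simp
  · exact mul_nonpos_of_nonpos_of_nonneg h (Complex.normSq_nonneg _)

lemma qf_pos_coordKer {M : Matrix n n ℂ} (hM : M.IsHermitian) (x : n → ℂ)
    (hx : x ∈ coordKer (hM.eigenvectorUnitary : Matrix n n ℂ) (fun i => hM.eigenvalues i ≤ 0))
    (hx0 : x ≠ 0) : 0 < qf M x := by
  set y := star (hM.eigenvectorUnitary : Matrix n n ℂ) *ᵥ x with hy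
  have hy0 : y ≠ 0 := by
    intro h
    apply hx0
    have := (bij_star_unitary hM.eigenvectorUnitary).1 (a₁ := x) (a₂ := 0)
    simp only [Matrix.mulVecLin_apply, Matrix.mulVec_zero] at this
    exact this (by rw [← hy, h])
  obtain ⟨j, hj⟩ : ∃ j, y j ≠ 0 := by
    by_contra h; push_neg at h; exact hy0 (funext h)
  have hjpos : 0 < hM.eigenvalues j := by
    by_contra h
    exact hj (mem_coordKer.mp hx j (not_lt.mp h))
  rw [qf_spectral hM]
  refine Finset.sum_pos' (fun i _ => ?_) ⟨j, Finset.mem_univ j, ?_⟩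
  · rcases le_or_gt (hM.eigenvalues i) 0 with h | h
    · rw [mem_coordKer.mp hx i h]; simp
    · exact mul_nonneg h.le (Complex.normSq_nonneg _)
  · exact mul_pos hjpos (Complex.normSq_pos.mpr hj)

lemma le_posIdx {M : Matrix n n ℂ} (hM : M.IsHermitian) (P : Submodule ℂ (n → ℂ))
    (hpos : ∀ x ∈ P, x ≠ 0 → 0 < qf M x) : finrank ℂ P ≤ posIdx hM := by
  classical
  have hd : Disjoint P (coordKer (hM.eigenvectorUnitary : Matrix n n ℂ)
      (fun i => 0 < hM.eigenvalues i)) :=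
    disjoint_of_qf hpos (fun x hx => qf_nonpos_coordKer hM x hx)
  have h1 : finrank ℂ P + finrank ℂ (coordKer (hM.eigenvectorUnitary : Matrix n n ℂ)
      (fun i => 0 < hM.eigenvalues i)) ≤ Fintype.card n := by
    have := Submodule.finrank_add_finrank_le_of_disjoint hd
    rwa [Module.finrank_fintype_fun_eq_card] at this
  have h2 := finrank_coordKer (hM.eigenvectorUnitary : Matrix n n ℂ)
    (bij_star_unitary hM.eigenvectorUnitary).2 (fun i => 0 < hM.eigenvalues i)
  rw [posIdx]
  omega

lemma posIdx_add_le {M : Matrix n n ℂ} (hM : M.IsHermitian) (W : Submodule ℂ (n → ℂ))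
    (hneg : ∀ x ∈ W, qf M x ≤ 0) : posIdx hM + finrank ℂ W ≤ Fintype.card n := by
  classical
  have hd : Disjoint (coordKer (hM.eigenvectorUnitary : Matrix n n ℂ)
      (fun i => hM.eigenvalues i ≤ 0)) W :=
    disjoint_of_qf (fun x hx hx0 => qf_pos_coordKer hM x hx hx0) hneg
  have h1 : finrank ℂ (coordKer (hM.eigenvectorUnitary : Matrix n n ℂ)
      (fun i => hM.eigenvalues i ≤ 0)) + finrank ℂ W ≤ Fintype.card n := by
    have := Submodule.finrank_add_finrank_le_of_disjoint hd
    rwa [Module.finrank_fintype_fun_eq_card] at this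
  have h2 := finrank_coordKer (hM.eigenvectorUnitary : Matrix n n ℂ)
    (bij_star_unitary hM.eigenvectorUnitary).2 (fun i => hM.eigenvalues i ≤ 0)
  have h3 : Fintype.card {i // hM.eigenvalues i ≤ 0} + posIdx hM = Fintype.card n := by
    rw [posIdx]
    have h4 : Fintype.card {i // hM.eigenvalues i ≤ 0}
        = Fintype.card {i // ¬ 0 < hM.eigenvalues i} :=
      Fintype.card_congr (Equiv.subtypeEquivRight (by intro i; simp [not_lt]))
    rw [h4, Fintype.card_subtype_compl]
    have := Fintype.card_subtype_le (fun i => 0 < hM.eigenvalues i)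
    omega
  omega

end PJAux

namespace PJConc

open PJAux

lemma sum_ite_ne' {α} [Fintype α] [DecidableEq α] (f : α → ℂ) (i : α) :
    ∑ j, (if i = j then 0 else f j) = (∑ j, f j) - f i := by
  have h : ∀ j, (if i = j then (0:ℂ) else f j) = f j - (if i = j then f j else 0) :=
    fun j => by split <;> simp
  simp [h, Finset.sum_sub_distrib, Finset.sum_ite_eq]

lemma dot_pathJoin (r s : ℕ) (x : Fin r ⊕ Unit ⊕ Unit ⊕ Fin s → ℂ) :
    star x ⬝ᵥ (pathJoinAdj r s) *ᵥ x =
      (∑ i, (starRingEnd ℂ) (x (.inl i))) * (∑ i, x (.inl i))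
      - (∑ i, (starRingEnd ℂ) (x (.inl i)) * x (.inl i))
      + (∑ i, (starRingEnd ℂ) (x (.inl i))) * x (.inr (.inl ()))
      + (starRingEnd ℂ) (x (.inr (.inl ()))) * (∑ i, x (.inl i))
      + Complex.I * (starRingEnd ℂ) (x (.inr (.inl ()))) * x (.inr (.inr (.inl ())))
      - Complex.I * (starRingEnd ℂ) (x (.inr (.inr (.inl ())))) * x (.inr (.inl ()))
      + (starRingEnd ℂ) (x (.inr (.inr (.inl ())))) * (∑ j, x (.inr (.inr (.inr j))))
      + (∑ j, (starRingEnd ℂ) (x (.inr (.inr (.inr j))))) * x (.inr (.inr (.inl ())))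
      + (∑ j, (starRingEnd ℂ) (x (.inr (.inr (.inr j))))) * (∑ j, x (.inr (.inr (.inr j))))
      - (∑ j, (starRingEnd ℂ) (x (.inr (.inr (.inr j)))) * x (.inr (.inr (.inr j)))) := by
  simp only [dotProduct, mulVec, pathJoinAdj, Fintype.sum_sum_type, Finset.univ_unique,
    Finset.sum_singleton, Pi.star_apply, RCLike.star_def, ite_mul, zero_mul, one_mul,
    mul_zero, add_zero, zero_add, mul_add, Finset.sum_add_distrib, Finset.mul_sum,
    mul_ite, sum_ite_ne', Finset.sum_sub_distrib, Finset.sum_const_zero]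
  simp only [← Finset.sum_mul, ← Finset.mul_sum]
  ring

/-- Real-arithmetic key inequality for the nonpositive subspace. -/
lemma keyW (R Sg S1 S2 b1 b2 c1 c2 T1 T2 A D : ℝ)
    (hR : 2 ≤ R) (hSg : 2 ≤ Sg)
    (hb1 : R * b1 = -((R - 1) * S1)) (hb2 : R * b2 = -((R - 1) * S2))
    (hT1 : R * T1 = -((R - 1) * c1)) (hT2 : R * T2 = -((R - 1) * c2))
    (hA : S1 ^ 2 + S2 ^ 2 ≤ R * A) (hD : T1 ^ 2 + T2 ^ 2 ≤ Sg * D) :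
    S1 ^ 2 + S2 ^ 2 - A + 2 * (S1 * b1 + S2 * b2) + 2 * (b2 * c1 - b1 * c2)
      + 2 * (c1 * T1 + c2 * T2) + (T1 ^ 2 + T2 ^ 2) - D ≤ 0 := by
  have key : Sg * R * R * (S1 ^ 2 + S2 ^ 2 - A + 2 * (S1 * b1 + S2 * b2)
      + 2 * (b2 * c1 - b1 * c2) + 2 * (c1 * T1 + c2 * T2) + (T1 ^ 2 + T2 ^ 2) - D)
      = -(Sg * R * (R - 1) * ((S2 + c1) ^ 2 + (S1 - c2) ^ 2))
        - (R - 1) * (Sg + (R - 1)) * (c1 ^ 2 + c2 ^ 2)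
        - Sg * R * (R * A - (S1 ^ 2 + S2 ^ 2))
        - R ^ 2 * (Sg * D - (T1 ^ 2 + T2 ^ 2)) := by
    linear_combination (2 * Sg * R * (S1 - c2)) * hb1 + (2 * Sg * R * (S2 + c1)) * hb2
      + (2 * Sg * R * c1 + (Sg - 1) * (R * T1 - (R - 1) * c1)) * hT1
      + (2 * Sg * R * c2 + (Sg - 1) * (R * T2 - (R - 1) * c2)) * hT2
  have hR1 : (0:ℝ) ≤ R - 1 := by linarith
  have t1 : 0 ≤ Sg * R * (R - 1) * ((S2 + c1) ^ 2 + (S1 - c2) ^ 2) := by positivity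
  have t2 : 0 ≤ (R - 1) * (Sg + (R - 1)) * (c1 ^ 2 + c2 ^ 2) := by positivity
  have t3 : 0 ≤ Sg * R * (R * A - (S1 ^ 2 + S2 ^ 2)) := by
    apply mul_nonneg (by positivity); linarith
  have t4 : 0 ≤ R ^ 2 * (Sg * D - (T1 ^ 2 + T2 ^ 2)) := by
    apply mul_nonneg (by positivity); linarith
  nlinarith [key, t1, t2, t3, t4, mul_pos (mul_pos (by linarith : (0:ℝ) < Sg)
    (by linarith : (0:ℝ) < R)) (by linarith : (0:ℝ) < R)]

/-- Real-arithmetic key inequality for the positive subspace. -/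
lemma keyP (R Sg a1 a2 e1 e2 : ℝ) (hR : 2 ≤ R) (hSg : 2 ≤ Sg)
    (h0 : 0 < a1 ^ 2 + a2 ^ 2 + e1 ^ 2 + e2 ^ 2) :
    0 < (R ^ 2 + R) * (a1 ^ 2 + a2 ^ 2) + (Sg ^ 2 + Sg) * (e1 ^ 2 + e2 ^ 2)
      + 2 * (a2 * e1 - a1 * e2) := by
  have h1 : 0 ≤ (R ^ 2 + R - 6) * (a1 ^ 2 + a2 ^ 2) := by
    apply mul_nonneg (by nlinarith) (by positivity)
  have h2 : 0 ≤ (Sg ^ 2 + Sg - 6) * (e1 ^ 2 + e2 ^ 2) := by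
    apply mul_nonneg (by nlinarith) (by positivity)
  nlinarith [sq_nonneg (a2 + e1), sq_nonneg (a1 - e2), h1, h2, h0]


variable (r s : ℕ)

noncomputable def ell1 : ((Fin r ⊕ Unit ⊕ Unit ⊕ Fin s) → ℂ) →ₗ[ℂ] ℂ where
  toFun x := ((r : ℂ) - 1) * (∑ i, x (.inl i)) + (r : ℂ) * x (.inr (.inl ()))
  map_add' x y := by simp only [Pi.add_apply, Finset.sum_add_distrib]; ring
  map_smul' m x := by simp only [Pi.smul_apply, smul_eq_mul, ← Finset.mul_sum,
    RingHom.id_apply]; ring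

noncomputable def ell3 : ((Fin r ⊕ Unit ⊕ Unit ⊕ Fin s) → ℂ) →ₗ[ℂ] ℂ where
  toFun x := ((r : ℂ) - 1) * x (.inr (.inr (.inl ()))) + (r : ℂ) * (∑ j, x (.inr (.inr (.inr j))))
  map_add' x y := by simp only [Pi.add_apply, Finset.sum_add_distrib]; ring
  map_smul' m x := by simp only [Pi.smul_apply, smul_eq_mul, ← Finset.mul_sum,
    RingHom.id_apply]; ring

noncomputable def lW : ((Fin r ⊕ Unit ⊕ Unit ⊕ Fin s) → ℂ) →ₗ[ℂ] ℂ × ℂ :=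
  (ell1 r s).prod (ell3 r s)

lemma lW_surjective (hr : 2 ≤ r) : Function.Surjective (lW r s) := by
  have hr0 : (r : ℂ) ≠ 0 := Nat.cast_ne_zero.mpr (by omega)
  have hr1 : (r : ℂ) - 1 ≠ 0 := by
    rw [sub_ne_zero]
    intro h
    have : r = 1 := Nat.cast_eq_one.mp h
    omega
  intro z
  refine ⟨Sum.elim (fun _ => 0) (Sum.elim (fun _ => z.1 / r)
    (Sum.elim (fun _ => z.2 / ((r : ℂ) - 1)) (fun _ => 0))), ?_⟩
  have : ∀ w : ℂ × ℂ, w.1 = z.1 → w.2 = z.2 → w = z := fun w h1 h2 => Prod.ext h1 h2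
  apply this
  · show ((r : ℂ) - 1) * (∑ i : Fin r, (0:ℂ)) + (r : ℂ) * (z.1 / r) = z.1
    field_simp
    simp
  · show ((r : ℂ) - 1) * (z.2 / ((r : ℂ) - 1)) + (r : ℂ) * (∑ j : Fin s, (0:ℂ)) = z.2
    field_simp
    simp

lemma finrank_kerW (hr : 2 ≤ r) :
    finrank ℂ (LinearMap.ker (lW r s)) + 2 = Fintype.card (Fin r ⊕ Unit ⊕ Unit ⊕ Fin s) := by
  have h := LinearMap.finrank_range_add_finrank_ker (lW r s)
  rw [LinearMap.range_eq_top.mpr (lW_surjective r s hr), finrank_top,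
    Module.finrank_fintype_fun_eq_card] at h
  have h2 : finrank ℂ (ℂ × ℂ) = 2 := by
    simp [Module.finrank_prod]
  omega


lemma cs_bound {m : ℕ} (f : Fin m → ℂ) :
    (∑ i, f i).re ^ 2 + (∑ i, f i).im ^ 2 ≤ (m : ℝ) * ∑ i, Complex.normSq (f i) := by
  have hre := sq_sum_le_card_mul_sum_sq (s := (Finset.univ : Finset (Fin m)))
    (f := fun i => (f i).re)
  have him := sq_sum_le_card_mul_sum_sq (s := (Finset.univ : Finset (Fin m)))
    (f := fun i => (f i).im)
  simp only [Finset.card_univ, Fintype.card_fin] at hre him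
  have hS : (∑ i, f i).re = ∑ i, (f i).re := by rw [Complex.re_sum]
  have hSi : (∑ i, f i).im = ∑ i, (f i).im := by rw [Complex.im_sum]
  have hnq : ∑ i, Complex.normSq (f i) = (∑ i, (f i).re ^ 2) + ∑ i, (f i).im ^ 2 := by
    rw [← Finset.sum_add_distrib]
    exact Finset.sum_congr rfl fun i _ => by rw [Complex.normSq_apply]; ring
  rw [hS, hSi, hnq]
  nlinarith [hre, him]

lemma conj_mul_sum_eq {m : ℕ} (f : Fin m → ℂ) :
    (∑ i, (starRingEnd ℂ) (f i) * f i) = ((∑ i, Complex.normSq (f i) : ℝ) : ℂ) := by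
  rw [Complex.ofReal_sum]
  exact Finset.sum_congr rfl fun i _ => by rw [mul_comm, Complex.mul_conj]

lemma qf_nonpos_kerW (hr : 2 ≤ r) (hs : 2 ≤ s) :
    ∀ x ∈ LinearMap.ker (lW r s), qf (pathJoinAdj r s) x ≤ 0 := by
  intro x hx
  rw [LinearMap.mem_ker] at hx
  have h1 : ((r : ℂ) - 1) * (∑ i, x (.inl i)) + (r : ℂ) * x (.inr (.inl ())) = 0 :=
    congrArg Prod.fst hx
  have h3 : ((r : ℂ) - 1) * x (.inr (.inr (.inl ())))
      + (r : ℂ) * (∑ j, x (.inr (.inr (.inr j)))) = 0 :=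
    congrArg Prod.snd hx
  rw [qf_def, dot_pathJoin]
  simp only [← map_sum]
  rw [conj_mul_sum_eq (fun i => x (.inl i)), conj_mul_sum_eq (fun j => x (.inr (.inr (.inr j))))]
  set S := ∑ i, x (.inl i) with hS
  set b := x (.inr (.inl ())) with hb
  set c := x (.inr (.inr (.inl ()))) with hc
  set T := ∑ j, x (.inr (.inr (.inr j))) with hT
  set A := ∑ i, Complex.normSq (x (.inl i)) with hA
  set D := ∑ j, Complex.normSq (x (.inr (.inr (.inr j)))) with hD
  have h1re := congrArg Complex.re h1
  have h1im := congrArg Complex.im h1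
  have h3re := congrArg Complex.re h3
  have h3im := congrArg Complex.im h3
  simp only [Complex.add_re, Complex.add_im, Complex.mul_re, Complex.mul_im,
    Complex.sub_re, Complex.sub_im, Complex.natCast_re, Complex.natCast_im,
    Complex.one_re, Complex.one_im, Complex.zero_re, Complex.zero_im,
    sub_zero, zero_mul, mul_zero, zero_sub, add_zero, zero_add] at h1re h1im h3re h3im
  have hb1 : (r : ℝ) * b.re = -(((r : ℝ) - 1) * S.re) := by linear_combination h1re
  have hb2 : (r : ℝ) * b.im = -(((r : ℝ) - 1) * S.im) := by linear_combination h1im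
  have hT1 : (r : ℝ) * T.re = -(((r : ℝ) - 1) * c.re) := by linear_combination h3re
  have hT2 : (r : ℝ) * T.im = -(((r : ℝ) - 1) * c.im) := by linear_combination h3im
  have hCS1 : S.re ^ 2 + S.im ^ 2 ≤ (r : ℝ) * A := by
    rw [hS, hA]; exact cs_bound _
  have hCS2 : T.re ^ 2 + T.im ^ 2 ≤ (s : ℝ) * D := by
    rw [hT, hD]; exact cs_bound _
  have hr' : (2 : ℝ) ≤ (r : ℝ) := by exact_mod_cast hr
  have hs' : (2 : ℝ) ≤ (s : ℝ) := by exact_mod_cast hs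
  have key := keyW (r : ℝ) (s : ℝ) S.re S.im b.re b.im c.re c.im T.re T.im A D
    hr' hs' hb1 hb2 hT1 hT2 hCS1 hCS2
  simp only [Complex.add_re, Complex.sub_re, Complex.mul_re, Complex.mul_im,
    Complex.conj_re, Complex.conj_im, Complex.I_re, Complex.I_im, Complex.ofReal_re,
    Complex.ofReal_im, zero_mul, mul_zero, one_mul, zero_sub, sub_zero, neg_mul,
    mul_neg, neg_neg, zero_add, add_zero]
  nlinarith [key]


noncomputable def inj2 : (ℂ × ℂ) →ₗ[ℂ] ((Fin r ⊕ Unit ⊕ Unit ⊕ Fin s) → ℂ) where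
  toFun p := Sum.elim (fun _ => p.1) (Sum.elim (fun _ => p.1)
    (Sum.elim (fun _ => p.2) (fun _ => p.2)))
  map_add' p q := by funext k; rcases k with i | (u | (w | j)) <;> rfl
  map_smul' m p := by funext k; rcases k with i | (u | (w | j)) <;> rfl

lemma inj2_injective : Function.Injective (inj2 r s) := by
  intro p q h
  have h1 : p.1 = q.1 := congrFun h (.inr (.inl ()))
  have h2 : p.2 = q.2 := congrFun h (.inr (.inr (.inl ())))
  exact Prod.ext h1 h2

lemma finrank_rangeP : finrank ℂ (LinearMap.range (inj2 r s)) = 2 := by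
  rw [LinearMap.finrank_range_of_inj (inj2_injective r s)]
  simp [Module.finrank_prod]

lemma qf_pos_rangeP (hr : 2 ≤ r) (hs : 2 ≤ s) :
    ∀ x ∈ LinearMap.range (inj2 r s), x ≠ 0 → 0 < qf (pathJoinAdj r s) x := by
  rintro x ⟨p, rfl⟩ hx0
  have hp : p ≠ 0 := by
    intro h; apply hx0; rw [h, map_zero]
  have hp0 : 0 < Complex.normSq p.1 + Complex.normSq p.2 := by
    have h12 : p.1 ≠ 0 ∨ p.2 ≠ 0 := by
      by_contra h; push_neg at h; exact hp (Prod.ext h.1 h.2)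
    rcases h12 with h | h
    · have := Complex.normSq_pos.mpr h
      have h2 := Complex.normSq_nonneg p.2
      linarith
    · have := Complex.normSq_pos.mpr h
      have h2 := Complex.normSq_nonneg p.1
      linarith
  rw [qf_def, dot_pathJoin]
  simp only [inj2, LinearMap.coe_mk, AddHom.coe_mk, Sum.elim_inl, Sum.elim_inr,
    Finset.sum_const, Finset.card_univ, Fintype.card_fin, nsmul_eq_mul]
  have hr' : (2 : ℝ) ≤ (r : ℝ) := by exact_mod_cast hr
  have hs' : (2 : ℝ) ≤ (s : ℝ) := by exact_mod_cast hs
  have h0 : 0 < p.1.re ^ 2 + p.1.im ^ 2 + p.2.re ^ 2 + p.2.im ^ 2 := by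
    have e1 : Complex.normSq p.1 = p.1.re ^ 2 + p.1.im ^ 2 := by
      rw [Complex.normSq_apply]; ring
    have e2 : Complex.normSq p.2 = p.2.re ^ 2 + p.2.im ^ 2 := by
      rw [Complex.normSq_apply]; ring
    rw [e1, e2] at hp0; linarith
  have key := keyP (r : ℝ) (s : ℝ) p.1.re p.1.im p.2.re p.2.im hr' hs' h0
  simp only [_root_.map_mul, Complex.conj_natCast, Complex.add_re, Complex.sub_re,
    Complex.mul_re, Complex.mul_im, Complex.conj_re, Complex.conj_im, Complex.I_re,
    Complex.I_im, Complex.natCast_re, Complex.natCast_im, zero_mul, mul_zero, one_mul,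
    zero_sub, sub_zero, neg_mul, mul_neg, neg_neg, zero_add, add_zero]
  nlinarith [key]

end PJConc

/-- For `r ≥ 2` and `s ≥ 2` the matrix `pathJoinAdj r s` has exactly 2 positive
eigenvalues. -/
theorem pathJoinAdj_posIdx (r s : ℕ) (hr : 2 ≤ r) (hs : 2 ≤ s)
    (hH : (pathJoinAdj r s).IsHermitian) :
    posIdx hH = 2 := by
  have hup := PJAux.posIdx_add_le hH (LinearMap.ker (PJConc.lW r s))
    (PJConc.qf_nonpos_kerW r s hr hs)
  have hker := PJConc.finrank_kerW r s hr
  have hlo := PJAux.le_posIdx hH (LinearMap.range (PJConc.inj2 r s))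
    (PJConc.qf_pos_rangeP r s hr hs)
  rw [PJConc.finrank_rangeP] at hlo
  omega
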